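/- arXiv:2210.16506 — 3 statements merged into one kernel-verified Lean document; each statement's English description precedes it below -/
import Mathlib

section
/- In the no-limit clairvoyance game with stack size n, against player 2's strategy of calling a bet of size x with probability 1/(1+x) and player 1 bluffing with frequency x/(1+x) relative to value bets, the expected payoff to player 1 of betting size x is v(x) = x/(2(1+x)), which is strictly increasing in x on [0, n]. -/
/-!
Player 2's call frequency `1/(1+x)` makes a bluff with `L` worth exactly `-1/2`, the same as
giving up, so player 1's bluffing frequency drops out of the payoff. A value bet with `W` earns
`1/2 + x/(1+x)`, and averaging the two hands gives `x/(2(1+x)) = 1/2 - 1/(2(1+x))`, which is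
increasing on `x > -1`.
-/

/-- The value function `v(x) = x/(2(1+x))`. -/
noncomputable def clairvoyanceValue (x : ℝ) : ℝ := x / (2 * (1 + x))

open Set

lemma value_bet_payoff {x : ℝ} (hx : 1 + x ≠ 0) :
    (1/(1+x)) * (0.5 + x) + (1 - 1/(1+x)) * 0.5 = 1/2 + x/(1+x) := by
  field_simp
  ring

lemma bluff_payoff {x : ℝ} (hx : 1 + x ≠ 0) :
    (1/(1+x)) * (-(0.5 + x)) + (1 - 1/(1+x)) * 0.5 = -0.5 := by
  field_simp
  ring

lemma clairvoyanceValue_eq_half_sub {x : ℝ} (hx : 1 + x ≠ 0) :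
    clairvoyanceValue x = 1/2 - 1/(2*(1+x)) := by
  unfold clairvoyanceValue
  field_simp
  ring

lemma clairvoyance_expected_payoff {x : ℝ} (hx : 1 + x ≠ 0) :
    (1/2) * ((1/(1+x)) * (0.5 + x) + (1 - 1/(1+x)) * 0.5)
      + (1/2) * ((x/(1+x)) * ((1/(1+x)) * (-(0.5 + x)) + (1 - 1/(1+x)) * 0.5)
          + (1 - x/(1+x)) * (-0.5))
    = clairvoyanceValue x := by
  rw [value_bet_payoff hx, bluff_payoff hx, clairvoyanceValue_eq_half_sub hx]
  field_simp
  ring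

lemma clairvoyanceValue_strictMonoOn : StrictMonoOn clairvoyanceValue (Ioi (-1)) := by
  intro x hx y hy hxy
  have hx' : 0 < 1 + x := by linarith [mem_Ioi.mp hx]
  have hy' : 0 < 1 + y := by linarith
  rw [clairvoyanceValue_eq_half_sub hx'.ne', clairvoyanceValue_eq_half_sub hy'.ne']
  have : 1/(2*(1+y)) < 1/(2*(1+x)) := by gcongr
  linarith

theorem clairvoyance_bet_value_general (n : ℝ) :
    (∀ x : ℝ, 0 ≤ x → x ≤ n →
      (1/2) * ((1/(1+x)) * (0.5 + x) + (1 - 1/(1+x)) * 0.5)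
        + (1/2) * ((x/(1+x)) * ((1/(1+x)) * (-(0.5 + x)) + (1 - 1/(1+x)) * 0.5)
            + (1 - x/(1+x)) * (-0.5))
      = clairvoyanceValue x) ∧
    (∀ x y : ℝ, 0 ≤ x → x < y → y ≤ n →
      clairvoyanceValue x < clairvoyanceValue y) := by
  refine ⟨fun x hx _ => clairvoyance_expected_payoff (by linarith), ?_⟩
  intro x y hx hxy _
  exact clairvoyanceValue_strictMonoOn (mem_Ioi.mpr (by linarith)) (mem_Ioi.mpr (by linarith)) hxy

/-- In the no-limit clairvoyance game with stack size `n`, against player 2 calling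
a bet of `x` with probability `1/(1+x)` and player 1 bluffing with frequency `x/(1+x)`
(relative to always value-betting with a winning hand), the expected payoff to player 1
of betting `x` equals `v(x) = x/(2(1+x))`, which is strictly increasing on `[0,n]`. -/
theorem clairvoyance_bet_value (n : ℝ) (hn : 0 < n) :
    (∀ x : ℝ, 0 ≤ x → x ≤ n →
      (1/2) * ((1/(1+x)) * (0.5 + x) + (1 - 1/(1+x)) * 0.5)
        + (1/2) * ((x/(1+x)) * ((1/(1+x)) * (-(0.5 + x)) + (1 - 1/(1+x)) * 0.5)
            + (1 - x/(1+x)) * (-0.5))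
      = clairvoyanceValue x) ∧
    (∀ x y : ℝ, 0 ≤ x → x < y → y ≤ n →
      clairvoyanceValue x < clairvoyanceValue y) :=
  clairvoyance_bet_value_general n
end

section
/- Every observable perfect equilibrium of a two-player one-step extensive-form imperfect-information game is a Nash equilibrium of the game. -/
open Filter

/-!  An abstract two-player one-step extensive-form imperfect-information game
(OSEFG): player 1 receives a private type `τ₁ ∈ T1` uniformly at random and chooses
`a₁ ∈ A1`; player 2 observes `a₁` (but not `τ₁`) and chooses `a₂ ∈ A2`; player `i`
receives payoff `uᵢ τ₁ a₁ a₂`. -/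

/-- A behavioral strategy for player 1: a distribution over actions for each type. -/
def IsStrategy1 {T1 A1 : Type*} [Fintype A1] (σ : T1 → A1 → ℝ) : Prop :=
  (∀ τ a, 0 ≤ σ τ a) ∧ ∀ τ, ∑ a, σ τ a = 1

/-- A behavioral strategy for player 2: a distribution over actions for each
observed action of player 1. -/
def IsStrategy2 {A1 A2 : Type*} [Fintype A2] (σ : A1 → A2 → ℝ) : Prop :=
  (∀ a b, 0 ≤ σ a b) ∧ ∀ a, ∑ b, σ a b = 1

/-- Expected utility with respect to payoff function `u`, with the type `τ₁` drawn
uniformly at random. -/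
noncomputable def expUtil {T1 A1 A2 : Type*} [Fintype T1] [Fintype A1] [Fintype A2]
    (u : T1 → A1 → A2 → ℝ) (σ1 : T1 → A1 → ℝ) (σ2 : A1 → A2 → ℝ) : ℝ :=
  (1 / (Fintype.card T1 : ℝ)) * ∑ τ, ∑ a, ∑ b, σ1 τ a * σ2 a b * u τ a b

/-- Nash equilibrium of the OSEFG: no unilateral profitable deviation. -/
def IsNashEq {T1 A1 A2 : Type*} [Fintype T1] [Fintype A1] [Fintype A2]
    (u1 u2 : T1 → A1 → A2 → ℝ) (σ1 : T1 → A1 → ℝ) (σ2 : A1 → A2 → ℝ) : Prop :=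
  IsStrategy1 σ1 ∧ IsStrategy2 σ2 ∧
  (∀ σ1', IsStrategy1 σ1' → expUtil u1 σ1' σ2 ≤ expUtil u1 σ1 σ2) ∧
  (∀ σ2', IsStrategy2 σ2' → expUtil u2 σ1 σ2' ≤ expUtil u2 σ1 σ2)

/-- Nash equilibrium of the perturbed game `G_ε` in which player 1 must play the
observed action `a1obs` with total probability (summed over types) at least `ε`. -/
def IsNashEqPert {T1 A1 A2 : Type*} [Fintype T1] [Fintype A1] [Fintype A2]
    (ε : ℝ) (a1obs : A1) (u1 u2 : T1 → A1 → A2 → ℝ)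
    (σ1 : T1 → A1 → ℝ) (σ2 : A1 → A2 → ℝ) : Prop :=
  IsStrategy1 σ1 ∧ ε ≤ ∑ τ, σ1 τ a1obs ∧ IsStrategy2 σ2 ∧
  (∀ σ1', IsStrategy1 σ1' → ε ≤ ∑ τ, σ1' τ a1obs →
    expUtil u1 σ1' σ2 ≤ expUtil u1 σ1 σ2) ∧
  (∀ σ2', IsStrategy2 σ2' → expUtil u2 σ1 σ2' ≤ expUtil u2 σ1 σ2)

/-- `(σ1, σ2)` is an observable perfect equilibrium relative to the observed action
`a1obs`: it is the limit of a sequence of Nash equilibria of perturbed games `G_ε`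
with `ε → 0`. -/
def IsOPE {T1 A1 A2 : Type*} [Fintype T1] [Fintype A1] [Fintype A2]
    (a1obs : A1) (u1 u2 : T1 → A1 → A2 → ℝ)
    (σ1 : T1 → A1 → ℝ) (σ2 : A1 → A2 → ℝ) : Prop :=
  ∃ e : ℕ → ℝ, (∀ k, 0 < e k) ∧ Tendsto e atTop (nhds 0) ∧
  ∃ s1 : ℕ → T1 → A1 → ℝ, ∃ s2 : ℕ → A1 → A2 → ℝ,
    (∀ k, IsNashEqPert (e k) a1obs u1 u2 (s1 k) (s2 k)) ∧
    (∀ τ a, Tendsto (fun k => s1 k τ a) atTop (nhds (σ1 τ a))) ∧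
    (∀ a b, Tendsto (fun k => s2 k a b) atTop (nhds (σ2 a b)))

/-! The sets of strategies are closed and the expected utility is continuous, so every
inequality that holds along the perturbed equilibria survives in the limit. For player 2
this applies verbatim. A deviation `σ1'` of player 1 need not be admissible in `G_ε`, but
its mixture `(1 - ε) σ1' + ε a1obs` with the pure observed action is, and these mixtures
converge to `σ1'` as `ε → 0`. -/

section Strategies

variable {T1 A1 : Type*}

def mixPure [DecidableEq A1] (ε : ℝ) (a : A1) (σ : T1 → A1 → ℝ) : T1 → A1 → ℝ :=
  fun τ b => (1 - ε) * σ τ b + ε * if b = a then 1 else 0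

theorem tendsto_mixPure [DecidableEq A1] {ι : Type*} {l : Filter ι} {e : ι → ℝ}
    (he : Tendsto e l (nhds 0)) (a : A1) (σ : T1 → A1 → ℝ) :
    Tendsto (fun i => mixPure (e i) a σ) l (nhds σ) := by
  have hcont : Continuous fun ε : ℝ => mixPure ε a σ := by
    unfold mixPure
    fun_prop
  have hzero : mixPure 0 a σ = σ := by
    ext
    simp [mixPure]
  have := (hcont.tendsto 0).comp he
  rwa [hzero] at this

variable [Fintype A1]

theorem isClosed_setOf_isStrategy1 : IsClosed {σ : T1 → A1 → ℝ | IsStrategy1 σ} := by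
  simp only [IsStrategy1, Set.ofPred_and, Set.ofPred_forall]
  refine (isClosed_iInter fun τ => isClosed_iInter fun a => ?_).inter
    (isClosed_iInter fun τ => ?_)
  · exact isClosed_le continuous_const (by fun_prop)
  · exact isClosed_eq (by fun_prop) continuous_const

theorem isClosed_setOf_isStrategy2 : IsClosed {σ : T1 → A1 → ℝ | IsStrategy2 σ} :=
  isClosed_setOf_isStrategy1

variable [DecidableEq A1] {ε : ℝ} {σ : T1 → A1 → ℝ}

theorem IsStrategy1.mixPure (hσ : IsStrategy1 σ) (hε₀ : 0 ≤ ε) (hε₁ : ε ≤ 1) (a : A1) :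
    IsStrategy1 (_root_.mixPure ε a σ) := by
  refine ⟨fun τ b => ?_, fun τ => ?_⟩
  · have := hσ.1 τ b
    unfold _root_.mixPure
    split_ifs <;> nlinarith
  · simp [_root_.mixPure, Finset.sum_add_distrib, ← Finset.mul_sum, hσ.2 τ]

theorem le_sum_mixPure [Fintype T1] [Nonempty T1] (hσ : IsStrategy1 σ) (hε₀ : 0 ≤ ε)
    (hε₁ : ε ≤ 1) (a : A1) : ε ≤ ∑ τ, mixPure ε a σ τ a := by
  have hcard : (1 : ℝ) ≤ Fintype.card T1 := by exact_mod_cast Fintype.card_pos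
  have hσa : 0 ≤ ∑ τ, σ τ a := Finset.sum_nonneg fun τ _ => hσ.1 τ a
  calc ε ≤ (1 - ε) * ∑ τ, σ τ a + ε * Fintype.card T1 := by nlinarith
    _ = ∑ τ, mixPure ε a σ τ a := by
      simp [mixPure, Finset.sum_add_distrib, Finset.mul_sum, mul_comm]

end Strategies

section Utility

variable {T1 A1 A2 : Type*} [Fintype T1] [Fintype A1] [Fintype A2]

theorem continuous_expUtil (u : T1 → A1 → A2 → ℝ) :
    Continuous fun p : (T1 → A1 → ℝ) × (A1 → A2 → ℝ) => expUtil u p.1 p.2 := by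
  unfold expUtil
  fun_prop

theorem Filter.Tendsto.expUtil {ι : Type*} {l : Filter ι} (u : T1 → A1 → A2 → ℝ)
    {s1 : ι → T1 → A1 → ℝ} {s2 : ι → A1 → A2 → ℝ} {σ1 : T1 → A1 → ℝ} {σ2 : A1 → A2 → ℝ}
    (h1 : Tendsto s1 l (nhds σ1)) (h2 : Tendsto s2 l (nhds σ2)) :
    Tendsto (fun i => _root_.expUtil u (s1 i) (s2 i)) l (nhds (_root_.expUtil u σ1 σ2)) :=
  ((continuous_expUtil u).tendsto (σ1, σ2)).comp (f := fun i => (s1 i, s2 i))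
    (h1.prodMk_nhds h2)

end Utility

theorem ope_is_nash_general {T1 A1 A2 : Type*} [Fintype T1] [Fintype A1] [Fintype A2]
    [Nonempty T1]
    (u1 u2 : T1 → A1 → A2 → ℝ) (a1obs : A1)
    (σ1 : T1 → A1 → ℝ) (σ2 : A1 → A2 → ℝ)
    (h : IsOPE a1obs u1 u2 σ1 σ2) : IsNashEq u1 u2 σ1 σ2 := by
  classical
  obtain ⟨e, he_pos, he, s1, s2, hnash, hs1, hs2⟩ := h
  have hs1 : Tendsto s1 atTop (nhds σ1) := tendsto_pi_nhds.2 fun τ => tendsto_pi_nhds.2 (hs1 τ)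
  have hs2 : Tendsto s2 atTop (nhds σ2) := tendsto_pi_nhds.2 fun a => tendsto_pi_nhds.2 (hs2 a)
  refine ⟨isClosed_setOf_isStrategy1.mem_of_tendsto hs1 (.of_forall fun k => (hnash k).1),
    isClosed_setOf_isStrategy2.mem_of_tendsto hs2 (.of_forall fun k => (hnash k).2.2.1),
    fun σ1' hσ1' => ?_, fun σ2' hσ2' => ?_⟩
  · have hfeasible : ∀ᶠ k in atTop, expUtil u1 (mixPure (e k) a1obs σ1') (s2 k) ≤
        expUtil u1 (s1 k) (s2 k) := by
      filter_upwards [he.eventually_le_const one_pos] with k he₁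
      have he₀ := (he_pos k).le
      exact (hnash k).2.2.2.1 _ (hσ1'.mixPure he₀ he₁ a1obs) (le_sum_mixPure hσ1' he₀ he₁ a1obs)
    exact le_of_tendsto_of_tendsto ((tendsto_mixPure he a1obs σ1').expUtil u1 hs2)
      (hs1.expUtil u1 hs2) hfeasible
  · exact le_of_tendsto_of_tendsto' (hs1.expUtil u2 tendsto_const_nhds) (hs1.expUtil u2 hs2)
      fun k => (hnash k).2.2.2.2 σ2' hσ2'

/-- Every observable perfect equilibrium of a two-player one-step extensive-form
imperfect-information game is a Nash equilibrium of the game. -/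
theorem ope_is_nash {T1 A1 A2 : Type*} [Fintype T1] [Fintype A1] [Fintype A2]
    [Nonempty T1] [Nonempty A1] [Nonempty A2]
    (u1 u2 : T1 → A1 → A2 → ℝ) (a1obs : A1)
    (σ1 : T1 → A1 → ℝ) (σ2 : A1 → A2 → ℝ)
    (h : IsOPE a1obs u1 u2 σ1 σ2) : IsNashEq u1 u2 σ1 σ2 :=
  ope_is_nash_general u1 u2 a1obs σ1 σ2 h
end

section
/- Every two-player zero-sum extensive-form game with perfect recall has at least one observable perfect equilibrium: the perturbed games Gᵉ (adding the constraint cᵀx₁ ≥ ε to player 1's sequence-form polytope) have Nash equilibria for all small ε > 0, and by compactness of the strategy polytopes, any sequence of such equilibria as ε → 0 has a convergent subsequence whose limit is an observable perfect equilibrium. -/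
open Matrix Filter

/-! For `ε ≤ cᵀx₀`, with `x₀` a feasible strategy, the perturbed game `Gᵉ` is a bilinear game on
nonempty compact convex sets, so it has a saddle point by the von Neumann–Sion minimax theorem.
Along `ε = cᵀx₀ / (k + 1)` these equilibria lie in the compact set `X₁ × X₂`, so a subsequence
converges. -/

theorem LinearMap.exists_isSaddlePointOn_of_finiteDimensional
    {E F : Type*} [AddCommGroup E] [Module ℝ E] [TopologicalSpace E] [IsTopologicalAddGroup E]
    [ContinuousSMul ℝ E] [T2Space E] [FiniteDimensional ℝ E]
    [AddCommGroup F] [Module ℝ F] [TopologicalSpace F] [IsTopologicalAddGroup F]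
    [ContinuousSMul ℝ F] [T2Space F] [FiniteDimensional ℝ F]
    (B : E →ₗ[ℝ] F →ₗ[ℝ] ℝ) {X : Set E} {Y : Set F}
    (hXne : X.Nonempty) (hXconv : Convex ℝ X) (hXcomp : IsCompact X)
    (hYne : Y.Nonempty) (hYconv : Convex ℝ Y) (hYcomp : IsCompact Y) :
    ∃ a ∈ X, ∃ b ∈ Y, IsSaddlePointOn X Y (fun x y => B x y) a b :=
  Sion.exists_isSaddlePointOn hXne hXconv hXcomp
    (fun y _ =>
      (B.flip y).continuous_of_finiteDimensional.lowerSemicontinuous.lowerSemicontinuousOn _)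
    (fun y _ => ((B.flip y).convexOn hXconv).quasiconvexOn) hYconv hYne hYcomp
    (fun x _ =>
      (B x).continuous_of_finiteDimensional.upperSemicontinuous.upperSemicontinuousOn _)
    (fun x _ => ((B x).concaveOn hYconv).quasiconcaveOn)

theorem Matrix.exists_isSaddlePointOn_dotProduct_mulVec {m n : Type*} [Fintype m] [Fintype n]
    [DecidableEq m] [DecidableEq n]
    (A : Matrix n m ℝ) {X : Set (m → ℝ)} {Y : Set (n → ℝ)}
    (hXne : X.Nonempty) (hXconv : Convex ℝ X) (hXcomp : IsCompact X)
    (hYne : Y.Nonempty) (hYconv : Convex ℝ Y) (hYcomp : IsCompact Y) :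
    ∃ a ∈ X, ∃ b ∈ Y, IsSaddlePointOn X Y (fun x y => y ⬝ᵥ A *ᵥ x) a b := by
  simpa [toLinearMap₂'_apply'] using
    (toLinearMap₂' ℝ A).flip.exists_isSaddlePointOn_of_finiteDimensional
      hXne hXconv hXcomp hYne hYconv hYcomp

theorem observable_perfect_equilibrium_exists_general (d1 d2 : ℕ)
    (A2 : Matrix (Fin d2) (Fin d1) ℝ)
    (c : Fin d1 → ℝ)
    (X1 : Set (Fin d1 → ℝ))
    (X2 : Set (Fin d2 → ℝ))
    (hne2 : X2.Nonempty)
    (hcomp1 : IsCompact X1) (hcomp2 : IsCompact X2)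
    (hconv1 : Convex ℝ X1) (hconv2 : Convex ℝ X2)
    (hfeas : ∃ x ∈ X1, 0 < c ⬝ᵥ x) :
    ∃ x1 ∈ X1, ∃ x2 ∈ X2,
      ∃ e : ℕ → ℝ, (∀ k, 0 < e k) ∧ Tendsto e atTop (nhds 0) ∧
      ∃ y1 : ℕ → Fin d1 → ℝ, ∃ y2 : ℕ → Fin d2 → ℝ,
        (∀ k, y1 k ∈ X1 ∧ e k ≤ c ⬝ᵥ y1 k ∧ y2 k ∈ X2 ∧
          (∀ z ∈ X2, z ⬝ᵥ A2.mulVec (y1 k) ≤ y2 k ⬝ᵥ A2.mulVec (y1 k)) ∧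
          (∀ z ∈ X1, e k ≤ c ⬝ᵥ z → y2 k ⬝ᵥ A2.mulVec (y1 k) ≤ y2 k ⬝ᵥ A2.mulVec z)) ∧
        Tendsto y1 atTop (nhds x1) ∧ Tendsto y2 atTop (nhds x2) := by
  obtain ⟨x0, hx0, hpos⟩ := hfeas
  set e : ℕ → ℝ := fun k => c ⬝ᵥ x0 / (k + 1)
  have he_pos (k : ℕ) : 0 < e k := by positivity
  have he_tendsto : Tendsto e atTop (nhds 0) := by
    simpa [e, Function.comp_def] using
      (tendsto_const_div_atTop_nhds_zero_nat (c ⬝ᵥ x0)).comp (tendsto_add_atTop_nat 1)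
  set S : ℕ → Set (Fin d1 → ℝ) := fun k => X1 ∩ {x | e k ≤ c ⬝ᵥ x}
  have hS_ne (k : ℕ) : (S k).Nonempty := ⟨x0, hx0, div_le_self hpos.le (by simp)⟩
  have hS_conv (k : ℕ) : Convex ℝ (S k) :=
    hconv1.inter (convex_halfSpace_ge ⟨dotProduct_add c, fun r x => dotProduct_smul r c x⟩ _)
  have hS_comp (k : ℕ) : IsCompact (S k) :=
    hcomp1.inter_right (isClosed_le continuous_const (continuous_const.dotProduct continuous_id))
  choose y1 hy1 y2 hy2 hsaddle using fun k =>
    A2.exists_isSaddlePointOn_dotProduct_mulVec (hS_ne k) (hS_conv k) (hS_comp k) hne2 hconv2 hcomp2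
  obtain ⟨⟨x1, x2⟩, ⟨hx1, hx2⟩, φ, hφ, hlim⟩ := (hcomp1.prod hcomp2).tendsto_subseq
    (x := fun k => (y1 k, y2 k)) fun k => Set.mk_mem_prod (hy1 k).1 (hy2 k)
  refine ⟨x1, hx1, x2, hx2, e ∘ φ, fun k => he_pos _, he_tendsto.comp hφ.tendsto_atTop,
    y1 ∘ φ, y2 ∘ φ, fun k => ⟨(hy1 _).1, (hy1 _).2, hy2 _, ?_, ?_⟩,
    (continuous_fst.tendsto _).comp hlim, (continuous_snd.tendsto _).comp hlim⟩
  · exact fun z hz => hsaddle (φ k) _ (hy1 _) z hz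
  · exact fun z hz hze => hsaddle (φ k) z ⟨hz, hze⟩ _ (hy2 _)

/-- Every two-player zero-sum extensive-form game with perfect recall (in sequence
form, with compact convex nonempty strategy polytopes) has at least one observable
perfect equilibrium: the perturbed games `Gᵉ` (adding the constraint `cᵀx₁ ≥ ε` to
player 1's polytope, feasible for small `ε`) have Nash equilibria, and by compactness
a sequence of such equilibria as `ε → 0` has a convergent subsequence, whose limit
`(x₁*, x₂*)` is an observable perfect equilibrium. -/
theorem observable_perfect_equilibrium_exists (d1 d2 k1 k2 : ℕ)
    (F1 : Matrix (Fin k1) (Fin d1) ℝ) (f1 : Fin k1 → ℝ)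
    (F2 : Matrix (Fin k2) (Fin d2) ℝ) (f2 : Fin k2 → ℝ)
    (A2 : Matrix (Fin d2) (Fin d1) ℝ)
    (c : Fin d1 → ℝ) (hc : ∀ i, c i = 0 ∨ c i = 1)
    (X1 : Set (Fin d1 → ℝ)) (hX1 : X1 = {x | F1.mulVec x = f1 ∧ ∀ i, 0 ≤ x i})
    (X2 : Set (Fin d2 → ℝ)) (hX2 : X2 = {x | F2.mulVec x = f2 ∧ ∀ i, 0 ≤ x i})
    (hne1 : X1.Nonempty) (hne2 : X2.Nonempty)
    (hcomp1 : IsCompact X1) (hcomp2 : IsCompact X2)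
    (hconv1 : Convex ℝ X1) (hconv2 : Convex ℝ X2)
    (hfeas : ∃ x ∈ X1, 0 < c ⬝ᵥ x) :
    ∃ x1 ∈ X1, ∃ x2 ∈ X2,
      ∃ e : ℕ → ℝ, (∀ k, 0 < e k) ∧ Tendsto e atTop (nhds 0) ∧
      ∃ y1 : ℕ → Fin d1 → ℝ, ∃ y2 : ℕ → Fin d2 → ℝ,
        (∀ k, y1 k ∈ X1 ∧ e k ≤ c ⬝ᵥ y1 k ∧ y2 k ∈ X2 ∧
          (∀ z ∈ X2, z ⬝ᵥ A2.mulVec (y1 k) ≤ y2 k ⬝ᵥ A2.mulVec (y1 k)) ∧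
          (∀ z ∈ X1, e k ≤ c ⬝ᵥ z → y2 k ⬝ᵥ A2.mulVec (y1 k) ≤ y2 k ⬝ᵥ A2.mulVec z)) ∧
        Tendsto y1 atTop (nhds x1) ∧ Tendsto y2 atTop (nhds x2) :=
  observable_perfect_equilibrium_exists_general d1 d2 A2 c X1 X2 hne2 hcomp1 hcomp2 hconv1 hconv2
    hfeas
end
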